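/- arXiv:1202.5147 — 5 statements merged into one kernel-verified Lean document; each statement's English description precedes it below -/
import Mathlib

section
/- Let i^* ⊣ i_* be an adjunction between categories E and D with unit η and counit ε, and suppose ε : i^* ∘ i_* ⟶ id_D is an isomorphism. Then for any functor F : E → C, the whiskered transformation F η : F ⟶ F ∘ i_* ∘ i^* is an isomorphism if and only if F maps every morphism φ of E such that i^*(φ) is an isomorphism to an isomorphism. -/
/-!
Since `ε` is an isomorphism, `i_*` is fully faithful and so `i^*` inverts every component of `η`;
hence a functor inverting the morphisms inverted by `i^*` inverts `η`. Conversely, if `Fη` is an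
isomorphism then `F ≅ i^* ⋙ i_* ⋙ F`, and the right-hand side inverts whatever `i^*` inverts.
-/

open CategoryTheory

namespace CategoryTheory.Adjunction

variable {E D C : Type*} [Category E] [Category D] [Category C] {L : E ⥤ D} {R : D ⥤ E}

lemma isIso_map_unit_app_of_isIso_counit (adj : L ⊣ R) [IsIso adj.counit] (X : E) :
    IsIso (L.map (adj.unit.app X)) :=
  have := adj.fullyFaithfulROfIsIsoCounit.full
  have := adj.fullyFaithfulROfIsIsoCounit.faithful
  inferInstance

lemma isIso_map_of_isIso_whiskerRight_unit (adj : L ⊣ R) (F : E ⥤ C)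
    [IsIso (Functor.whiskerRight adj.unit F)] {X Y : E} (φ : X ⟶ Y) [IsIso (L.map φ)] :
    IsIso (F.map φ) :=
  (NatIso.isIso_map_iff (asIso (Functor.whiskerRight adj.unit F)) φ).mpr
    (inferInstanceAs (IsIso (F.map (R.map (L.map φ)))))

lemma isIso_whiskerRight_unit_of_isIso_map (adj : L ⊣ R) (F : E ⥤ C)
    (hF : ∀ X : E, IsIso (F.map (adj.unit.app X))) :
    IsIso (Functor.whiskerRight adj.unit F) :=
  have : ∀ X, IsIso ((Functor.whiskerRight adj.unit F).app X) := hF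
  NatIso.isIso_of_isIso_app _

end CategoryTheory.Adjunction

/-- Let `i^* ⊣ i_*` be an adjunction with unit `η` and counit `ε`, and suppose the counit
is an isomorphism. For a functor `F : E ⥤ C`, the whiskered transformation
`Fη : F ⟶ i^* ⋙ i_* ⋙ F` (i.e. `F` is `i`-local) is an isomorphism iff `F` maps every
morphism `φ` such that `i^* φ` is an isomorphism to an isomorphism. -/
theorem ilocal_iff_inverts
    {E D C : Type*} [Category E] [Category D] [Category C]
    (istar : E ⥤ D) (ilow : D ⥤ E) (adj : istar ⊣ ilow) [IsIso adj.counit]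
    (F : E ⥤ C) :
    IsIso (CategoryTheory.Functor.whiskerRight adj.unit F) ↔
      ∀ {X Y : E} (φ : X ⟶ Y), IsIso (istar.map φ) → IsIso (F.map φ) :=
  ⟨fun _ _ _ φ _ => adj.isIso_map_of_isIso_whiskerRight_unit F φ,
    fun hF => adj.isIso_whiskerRight_unit_of_isIso_map F fun X =>
      hF _ (adj.isIso_map_unit_app_of_isIso_counit X)⟩
end

section
/- Let i^* ⊣ i_* be an adjunction between monoidal categories with i^* strong monoidal and counit an isomorphism, and let F : E → C be a strong monoidal functor that is i-local. Then the lax monoidal composite F ∘ i_* is strong monoidal, i.e. its unit and multiplication structure maps are isomorphisms. -/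
open CategoryTheory MonoidalCategory Functor.LaxMonoidal

/-!
Write `i_* = R` and `i^* = L`. The compatibility of the induced lax structure on `R` with the
adjunction reads `L (ε R) ≫ counit = η L` and `L (μ R) ≫ counit = δ L ≫ (counit ⊗ counit)`, so
once the counit is invertible `L` inverts the structure maps of `R`. An `i`-local strong monoidal
`F` therefore inverts them too, and the structure maps of `R ⋙ F` are those of `F` (isomorphisms)
followed by `F` applied to those of `R`.
-/

namespace CategoryTheory

section

variable {E D : Type*} [Category E] [Category D] [MonoidalCategory E] [MonoidalCategory D]
  {L : E ⥤ D} {R : D ⥤ E} [L.Monoidal] [R.LaxMonoidal]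

lemma Adjunction.isIso_map_ε_of_isIso_counit (adj : L ⊣ R) [adj.IsMonoidal] [IsIso adj.counit] :
    IsIso (L.map (ε R)) := by
  have : IsIso (L.map (ε R) ≫ adj.counit.app (𝟙_ D)) := by
    rw [adj.map_ε_comp_counit_app_unit]
    infer_instance
  exact IsIso.of_isIso_comp_right _ (adj.counit.app (𝟙_ D))

lemma Adjunction.isIso_map_μ_of_isIso_counit (adj : L ⊣ R) [adj.IsMonoidal] [IsIso adj.counit]
    (X Y : D) : IsIso (L.map (μ R X Y)) := by
  have : IsIso (L.map (μ R X Y) ≫ adj.counit.app (X ⊗ Y)) := by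
    rw [adj.map_μ_comp_counit_app_tensor]
    infer_instance
  exact IsIso.of_isIso_comp_right _ (adj.counit.app (X ⊗ Y))

end

section

variable {C D E : Type*} [Category C] [Category D] [Category E]
  [MonoidalCategory C] [MonoidalCategory D] [MonoidalCategory E]
  {G : D ⥤ E} [G.LaxMonoidal] {F : E ⥤ C} [F.Monoidal]

lemma Functor.isIso_ε_comp_of_isIso_map_ε (h : IsIso (F.map (ε G))) : IsIso (ε (G ⋙ F)) := by
  rw [comp_ε]
  infer_instance

lemma Functor.isIso_μ_comp_of_isIso_map_μ {X Y : D} (h : IsIso (F.map (μ G X Y))) :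
    IsIso (μ (G ⋙ F) X Y) := by
  rw [comp_μ]
  infer_instance

end

end CategoryTheory

/-- Let `i^* ⊣ i_*` be an adjunction between monoidal categories with `i^*` strong
monoidal and invertible counit, `i_*` carrying the induced lax monoidal structure, and
let `F : E ⥤ C` be a strong monoidal functor which is `i`-local (it inverts every
morphism inverted by `i^*`). Then the lax monoidal composite `F ∘ i_*` is strong
monoidal: its unit and multiplication structure maps are isomorphisms. -/
theorem ilocal_comp_pushforward_strong
    {E D C : Type*} [Category E] [Category D] [Category C]
    [MonoidalCategory E] [MonoidalCategory D] [MonoidalCategory C]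
    (istar : E ⥤ D) [istar.Monoidal] (ilow : D ⥤ E) (adj : istar ⊣ ilow)
    [IsIso adj.counit]
    (F : E ⥤ C) [F.Monoidal]
    (hloc : ∀ {X Y : E} (φ : X ⟶ Y), IsIso (istar.map φ) → IsIso (F.map φ)) :
    letI : ilow.LaxMonoidal := adj.rightAdjointLaxMonoidal
    IsIso (ε (ilow ⋙ F)) ∧ ∀ X Y : D, IsIso (μ (ilow ⋙ F) X Y) := by
  let : ilow.LaxMonoidal := adj.rightAdjointLaxMonoidal
  exact ⟨Functor.isIso_ε_comp_of_isIso_map_ε (hloc _ adj.isIso_map_ε_of_isIso_counit),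
    fun X Y => Functor.isIso_μ_comp_of_isIso_map_μ (hloc _ (adj.isIso_map_μ_of_isIso_counit X Y))⟩
end

section
/- Let F : C → D be a strong monoidal functor between monoidal categories where D is the category of modules over a commutative ring A. Suppose I is a non-unital commutative algebra object of C with a morphism ι : I → 1_C compatible with multiplication in the sense that the multiplication I ⊗ I → I equals (ι ⊗ id) followed by the unit action. If F(ι) : F(I) → A is an epimorphism of A-modules, then F(ι) is an isomorphism. -/
open CategoryTheory MonoidalCategory

/-!
Commutativity of `mul = (ι ▷ I) ≫ λ` together with naturality of the braiding gives
`(ι ▷ I) ≫ λ = (I ◁ ι) ≫ ρ`, an identity that any monoidal functor preserves. For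
`g = F ι` (up to the unit isomorphism `η`) it says `g x • y = g y • x` in `F I`.
Choosing `y` with `g y = 1`, which exists since `g` is onto `A`, gives `x = g x • y`,
so `g x = 0` forces `x = 0`.
-/

theorem LinearMap.injective_of_surjective_of_smul_comm {A M : Type*} [CommRing A]
    [AddCommGroup M] [Module A M] (g : M →ₗ[A] A) (hg : Function.Surjective g)
    (hcomm : ∀ x y, g x • y = g y • x) : Function.Injective g := by
  obtain ⟨y, hy⟩ := hg 1
  refine (injective_iff_map_eq_zero g).mpr fun x hx => ?_
  simpa [hx, hy] using (hcomm x y).symm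

theorem ModuleCat.isIso_of_epi_of_whiskerRight_leftUnitor_eq {A : Type*} [CommRing A]
    {M : ModuleCat A} (g : M ⟶ 𝟙_ (ModuleCat A)) [Epi g]
    (h : g ▷ M ≫ (λ_ M).hom = M ◁ g ≫ (ρ_ M).hom) : IsIso g := by
  have hsurj := (ModuleCat.epi_iff_surjective g).mp inferInstance
  have hcomm (x y : M) : g x • y = g y • x := ConcreteCategory.congr_hom h (x ⊗ₜ[A] y)
  rw [ConcreteCategory.isIso_iff_bijective]
  exact ⟨LinearMap.injective_of_surjective_of_smul_comm g.hom hsurj hcomm, hsurj⟩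

theorem CategoryTheory.MonoidalCategory.whiskerRight_leftUnitor_eq_whiskerLeft_rightUnitor_of_braiding
    {C : Type*} [Category C] [MonoidalCategory C] [BraidedCategory C]
    {X : C} (f : X ⟶ 𝟙_ C)
    (h : (β_ X X).hom ≫ f ▷ X ≫ (λ_ X).hom = f ▷ X ≫ (λ_ X).hom) :
    f ▷ X ≫ (λ_ X).hom = X ◁ f ≫ (ρ_ X).hom := by
  rw [← h, ← braiding_leftUnitor, ← Category.assoc, ← BraidedCategory.braiding_naturality_right,
    Category.assoc]

theorem CategoryTheory.Functor.Monoidal.whiskerRight_leftUnitor_eq_whiskerLeft_rightUnitor_map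
    {C D : Type*} [Category C] [MonoidalCategory C] [Category D] [MonoidalCategory D]
    (F : C ⥤ D) [F.Monoidal] {X : C} (f : X ⟶ 𝟙_ C)
    (h : f ▷ X ≫ (λ_ X).hom = X ◁ f ≫ (ρ_ X).hom) :
    (F.map f ≫ Functor.OplaxMonoidal.η F) ▷ F.obj X ≫ (λ_ (F.obj X)).hom =
      F.obj X ◁ (F.map f ≫ Functor.OplaxMonoidal.η F) ≫ (ρ_ (F.obj X)).hom := by
  have := congrArg F.map h
  simp only [Functor.map_comp, map_whiskerRight, map_whiskerLeft, map_leftUnitor,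
    map_rightUnitor, Category.assoc, μ_δ_assoc, cancel_epi] at this
  simpa only [comp_whiskerRight, MonoidalCategory.whiskerLeft_comp, Category.assoc] using this

theorem map_epi_iso_of_ideal_general
    {C : Type*} [Category C] [MonoidalCategory C] [BraidedCategory C]
    {A : Type*} [CommRing A]
    (F : C ⥤ ModuleCat A) [F.Monoidal]
    (I : C) (mul : I ⊗ I ⟶ I) (ι : I ⟶ 𝟙_ C)
    (hcomm : (β_ I I).hom ≫ mul = mul)
    (hfact : mul = (ι ⊗ₘ 𝟙 I) ≫ (λ_ I).hom)
    (hepi : Epi (F.map ι)) :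
    IsIso (F.map ι) := by
  rw [tensorHom_id] at hfact
  subst hfact
  have hsymm := Functor.Monoidal.whiskerRight_leftUnitor_eq_whiskerLeft_rightUnitor_map F ι
    (whiskerRight_leftUnitor_eq_whiskerLeft_rightUnitor_of_braiding ι hcomm)
  have hiso := ModuleCat.isIso_of_epi_of_whiskerRight_leftUnitor_eq _ hsymm
  exact IsIso.of_isIso_comp_right (F.map ι) (Functor.OplaxMonoidal.η F)

/-- Let `F : C ⥤ ModuleCat A` be a strong monoidal functor, `I` a non-unital commutative
algebra object of `C` with multiplication `mul : I ⊗ I ⟶ I`, and `ι : I ⟶ 𝟙_ C` a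
multiplicative morphism such that `mul` factors as `ι ⊗ 𝟙` followed by the unit action.
If `F ι` is an epimorphism of `A`-modules, then `F ι` is an isomorphism. -/
theorem map_epi_iso_of_ideal
    {C : Type*} [Category C] [MonoidalCategory C] [BraidedCategory C]
    {A : Type*} [CommRing A]
    (F : C ⥤ ModuleCat A) [F.Monoidal]
    (I : C) (mul : I ⊗ I ⟶ I) (ι : I ⟶ 𝟙_ C)
    (hcomm : (β_ I I).hom ≫ mul = mul)
    (hmult : mul ≫ ι = (ι ⊗ₘ ι) ≫ (λ_ (𝟙_ C)).hom)
    (hfact : mul = (ι ⊗ₘ 𝟙 I) ≫ (λ_ I).hom)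
    (hepi : Epi (F.map ι)) :
    IsIso (F.map ι) :=
  map_epi_iso_of_ideal_general F I mul ι hcomm hfact hepi
end

section
/- Let f, g : Spec(S) → X be morphisms of schemes with S a local ring and X quasi-separated, and suppose there exists a monoidal natural transformation α : f^* ⟶ g^*. Then the image f(y) of the closed point y of Spec(S) lies in the closure of {g(y)}. -/
open CategoryTheory AlgebraicGeometry TopologicalSpace MonoidalCategory

universe u

/-- The monoidal category of presheaves of `O_X`-modules on a scheme `X`. -/
noncomputable abbrev SchemeModules (X : Scheme.{u}) :=
  PresheafOfModules.{u} (X.sheaf.val ⋙ forget₂ CommRingCat RingCat)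

/-- The direct image functor on modules induced by a morphism of schemes `f : Y ⟶ X`. -/
noncomputable def schemePushforward {X Y : Scheme.{u}} (f : Y ⟶ X) :
    SchemeModules Y ⥤ SchemeModules X :=
  PresheafOfModules.pushforward (F := Opens.map f.base)
    (CategoryTheory.Functor.whiskerRight f.c (forget₂ CommRingCat RingCat))

/-!
Suppose `f(y)` lies in the open set `U = X \ closure {g(y)}`. As `y` is the closed point, `f⁻¹ U` is
all of `Spec S`. Let `B` be the presheaf quotient of `O_X` that vanishes on every open contained in
`U` and equals `O_X` elsewhere. A section of a pushforward `f_* N` over `W` is also a section over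
`W ∩ U`, where `B` vanishes; hence every map `B ⟶ f_* N` is zero and `f^* B = 0` by adjunction.
Monoidality of `α` factors `ε_G ≫ g^*(O_X ⟶ B)` through `α_B = 0`, so `g^*(O_X ⟶ B) = 0` because
`ε_G` is invertible. By adjunction again, `O_X ⟶ B ⟶ g_* B'` vanishes for the analogous quotient
`B'` of `O_{Spec S}` along `g⁻¹ U`; but it sends `1` to a nonzero global section, since `y ∉ g⁻¹ U`.
-/

universe v w

open Limits Opposite

namespace CategoryTheory

variable {C D : Type*} [Category C] [Category D]

theorem NatTrans.IsMonoidal.map_eq_zero_of_isZero [MonoidalCategory C] [MonoidalCategory D]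
    [HasZeroMorphisms D] {F G : C ⥤ D} [F.LaxMonoidal] [G.LaxMonoidal]
    [Epi (Functor.LaxMonoidal.ε G)] (α : F ⟶ G) [NatTrans.IsMonoidal α] {B : C}
    (hB : IsZero (F.obj B)) (u : 𝟙_ C ⟶ B) : G.map u = 0 := by
  rw [← cancel_epi (Functor.LaxMonoidal.ε G), comp_zero, ← NatTrans.IsMonoidal.unit (τ := α),
    Category.assoc, ← α.naturality u, hB.eq_of_src (α.app B) 0, comp_zero, comp_zero]

variable [HasZeroMorphisms C] [HasZeroMorphisms D] {L : C ⥤ D} {R : D ⥤ C}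

theorem Adjunction.isZero_obj_of_forall_eq_zero (adj : L ⊣ R) {B : C}
    (hB : ∀ (N : D) (h : B ⟶ R.obj N), h = 0) : IsZero (L.obj B) :=
  (IsZero.iff_id_eq_zero _).mpr <| (adj.homEquiv _ _).injective ((hB _ _).trans (hB _ _).symm)

theorem Adjunction.comp_eq_zero_of_map_eq_zero (adj : L ⊣ R) {A B : C} {u : A ⟶ B}
    (hu : L.map u = 0) {N : D} (q : B ⟶ R.obj N) : u ≫ q = 0 := by
  have := adj.isRightAdjoint
  rw [← (adj.homEquiv _ _).apply_symm_apply q, ← adj.homEquiv_naturality_left, hu, zero_comp,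
    adj.homEquiv_unit, R.map_zero, comp_zero]

end CategoryTheory

namespace PresheafOfModules

namespace Submodule

variable {C : Type*} [Category C] {R : Cᵒᵖ ⥤ RingCat.{u}} {M : PresheafOfModules.{v} R}
  (N : M.Submodule)

noncomputable def quotient : PresheafOfModules.{v} R where
  obj X := ModuleCat.of (R.obj X) (M.obj X ⧸ N.obj X)
  map {X Y} f := ModuleCat.semilinearMapAddEquiv _ _ _ <|
    (N.obj X).mapQ (N.obj Y) (M.restrictₛₗ f) (N.map f)
  map_id X := by
    ext x
    exact congrArg (Submodule.Quotient.mk (p := N.obj X)) (by simp)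
  map_comp {_ _ Z} f g := by
    ext x
    exact congrArg (Submodule.Quotient.mk (p := N.obj Z)) (M.map_comp_apply f g x)

noncomputable def mkQ : M ⟶ N.quotient where
  app X := ModuleCat.ofHom (N.obj X).mkQ
  naturality _ := rfl

noncomputable def descQ {P : PresheafOfModules.{v} R} (h : M ⟶ P)
    (hN : ∀ X, N.obj X ≤ LinearMap.ker (h.app X).hom) : N.quotient ⟶ P where
  app X := ModuleCat.ofHom ((N.obj X).liftQ (h.app X).hom (hN X))
  naturality f := by
    ext x
    obtain ⟨m, rfl⟩ := Submodule.Quotient.mk_surjective _ x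
    exact naturality_apply h f m

@[simp]
lemma mkQ_descQ {P : PresheafOfModules.{v} R} (h : M ⟶ P)
    (hN : ∀ X, N.obj X ≤ LinearMap.ker (h.app X).hom) : N.mkQ ≫ N.descQ h hN = h :=
  rfl

end Submodule

variable {X Y : TopCat.{w}} {f : Y ⟶ X} {R : (Opens X)ᵒᵖ ⥤ RingCat.{u}}
  {R' : (Opens Y)ᵒᵖ ⥤ RingCat.{u}}

lemma eq_zero_of_map_eq_zero_of_eq (N : PresheafOfModules.{v} R) {A B : Opens X} (hAB : A = B)
    (i : op A ⟶ op B) {z : N.obj (op A)} (hz : N.map i z = 0) : z = 0 := by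
  subst hAB
  rw [Subsingleton.elim i (𝟙 _)] at hz
  simp only [map_id, ModuleCat.restrictScalarsId'_inv_app,
    ModuleCat.restrictScalarsId'App_inv_apply] at hz
  exact hz

lemma hom_pushforward_eq_zero (φ : R ⟶ (Opens.map f).op ⋙ R') {U : Opens X}
    (hU : (Opens.map f).obj U = ⊤) {P : PresheafOfModules.{v} R}
    (hP : ∀ W : Opens X, P.map (homOfLE (inf_le_left : W ⊓ U ≤ W)).op = 0)
    {N : PresheafOfModules.{v} R'} (h : P ⟶ (pushforward φ).obj N) : h = 0 := by
  ext ⟨W⟩ x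
  let i : op W ⟶ op (W ⊓ U) := (homOfLE inf_le_left).op
  have hpre : (Opens.map f).obj W = (Opens.map f).obj (W ⊓ U) := by
    change _ = (Opens.map f).obj W ⊓ (Opens.map f).obj U
    rw [hU, inf_top_eq]
  refine N.eq_zero_of_map_eq_zero_of_eq hpre ((Opens.map f).map i.unop).op ?_
  have h_nat := naturality_apply h i x
  rw [hP W] at h_nat
  exact h_nat.symm.trans (map_zero (h.app _).hom)

noncomputable def unitToPushforwardUnit (φ : R ⟶ (Opens.map f).op ⋙ R') :
    unit R ⟶ (pushforward φ).obj (unit R') :=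
  (unitHomEquiv _).symm (sectionsMk (fun W => (1 : R'.obj (op ((Opens.map f).obj W.unop))))
    fun _ _ _ => unit_map_one _ _)

lemma unitToPushforwardUnit_app_one (φ : R ⟶ (Opens.map f).op ⋙ R') (W : (Opens X)ᵒᵖ) :
    (unitToPushforwardUnit φ).app W (1 : R.obj W) = (1 : R'.obj (op ((Opens.map f).obj W.unop))) :=
  congrArg (fun s => s.val W) ((unitHomEquiv ((pushforward φ).obj (unit R'))).apply_symm_apply
    (sectionsMk (fun W => (1 : R'.obj (op ((Opens.map f).obj W.unop)))) fun _ _ _ =>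
      unit_map_one _ _))

open Classical in
noncomputable def unitSubmoduleTopOn (R : (Opens X)ᵒᵖ ⥤ RingCat.{u}) (U : Opens X) :
    (unit R).Submodule where
  obj W := if W.unop ≤ U then ⊤ else ⊥
  map {W W'} i := by
    by_cases hW : W.unop ≤ U
    · rw [if_pos ((leOfHom i.unop).trans hW)]
      exact fun _ _ => trivial
    · rw [if_neg hW]
      exact bot_le

lemma unitSubmoduleTopOn_obj_of_le {U W : Opens X} (hW : W ≤ U) :
    (unitSubmoduleTopOn R U).obj (op W) = ⊤ :=
  if_pos hW

lemma unitSubmoduleTopOn_obj_of_not_le {U W : Opens X} (hW : ¬ W ≤ U) :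
    (unitSubmoduleTopOn R U).obj (op W) = ⊥ :=
  if_neg hW

noncomputable abbrev cutoff (R : (Opens X)ᵒᵖ ⥤ RingCat.{u}) (U : Opens X) :
    PresheafOfModules.{u} R :=
  (unitSubmoduleTopOn R U).quotient

lemma cutoff_map_eq_zero {U W W' : Opens X} (i : op W ⟶ op W') (hW' : W' ≤ U) :
    (cutoff R U).map i = 0 := by
  ext x
  obtain ⟨a, rfl⟩ := Submodule.Quotient.mk_surjective _ x
  exact (Submodule.Quotient.mk_eq_zero _).mpr
    ((unitSubmoduleTopOn_obj_of_le hW').symm ▸ Submodule.mem_top)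

noncomputable def cutoffHom (φ : R ⟶ (Opens.map f).op ⋙ R') (U : Opens X) :
    cutoff R U ⟶ (pushforward φ).obj (cutoff R' ((Opens.map f).obj U)) :=
  (unitSubmoduleTopOn R U).descQ
    (unitToPushforwardUnit φ ≫ (pushforward φ).map (unitSubmoduleTopOn R' _).mkQ)
    fun ⟨W⟩ a ha => by
      by_cases hW : W ≤ U
      · exact (Submodule.Quotient.mk_eq_zero _).mpr
          ((unitSubmoduleTopOn_obj_of_le ((Opens.map f).monotone hW)).symm ▸ Submodule.mem_top)
      · rw [unitSubmoduleTopOn_obj_of_not_le hW, Submodule.mem_bot] at ha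
        rw [ha, LinearMap.mem_ker, map_zero]

lemma mkQ_comp_cutoffHom_ne_zero (φ : R ⟶ (Opens.map f).op ⋙ R') {U : Opens X} (W : Opens X)
    (hW : ¬ (Opens.map f).obj W ≤ (Opens.map f).obj U)
    [Nontrivial (R'.obj (op ((Opens.map f).obj W)))] :
    (unitSubmoduleTopOn R U).mkQ ≫ cutoffHom φ U ≠ 0 := by
  intro h
  rw [cutoffHom, Submodule.mkQ_descQ] at h
  have h_one : Submodule.Quotient.mk (p := (unitSubmoduleTopOn R' ((Opens.map f).obj U)).obj
      (op ((Opens.map f).obj W))) (1 : R'.obj (op ((Opens.map f).obj W))) = 0 := by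
    rw [← unitToPushforwardUnit_app_one φ (op W)]
    exact congrArg (fun k => k.app (op W) (1 : R.obj (op W))) h
  have h_mem := (Submodule.Quotient.mk_eq_zero _).mp h_one
  rw [unitSubmoduleTopOn_obj_of_not_le hW] at h_mem
  exact one_ne_zero (α := R'.obj (op ((Opens.map f).obj W))) ((Submodule.mem_bot _).mp h_mem)

end PresheafOfModules

open PresheafOfModules

theorem image_closedPoint_mem_closure_of_tensor_transformation_general
    (S : Type u) [CommRing S] [IsLocalRing S]
    {X : Scheme.{u}}
    (f g : Spec (CommRingCat.of S) ⟶ X)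
    (F G : SchemeModules X ⥤ SchemeModules (Spec (CommRingCat.of S)))
    [F.Monoidal] [G.Monoidal]
    (adjF : F ⊣ schemePushforward f) (adjG : G ⊣ schemePushforward g)
    (hα : ∃ α : F ⟶ G, NatTrans.IsMonoidal α) :
    f.base (IsLocalRing.closedPoint S) ∈
      closure {g.base (IsLocalRing.closedPoint S)} := by
  obtain ⟨α, hα⟩ := hα
  by_contra hfy
  let y := IsLocalRing.closedPoint S
  let U : X.Opens := ⟨(closure {g.base y})ᶜ, isClosed_closure.isOpen_compl⟩
  have hB : IsZero (F.obj (cutoff _ U)) :=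
    adjF.isZero_obj_of_forall_eq_zero fun _ => hom_pushforward_eq_zero _
      (Scheme.preimage_eq_top_of_closedPoint_mem f hfy)
      fun _ => cutoff_map_eq_zero _ inf_le_right
  have hgU : ¬ g ⁻¹ᵁ ⊤ ≤ g ⁻¹ᵁ U := fun h => h (Set.mem_univ y) (subset_closure rfl)
  have : Nonempty (g ⁻¹ᵁ ⊤) := ⟨⟨y, trivial⟩⟩
  -- instance search does not see `Γ(Spec S, g ⁻¹ᵁ ⊤)` through `forget₂`
  have : Nontrivial (((Spec (CommRingCat.of S)).sheaf.obj ⋙ forget₂ CommRingCat RingCat).obj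
      (op (g ⁻¹ᵁ ⊤))) :=
    inferInstanceAs (Nontrivial Γ(Spec (CommRingCat.of S), g ⁻¹ᵁ ⊤))
  exact mkQ_comp_cutoffHom_ne_zero _ ⊤ hgU (adjG.comp_eq_zero_of_map_eq_zero
    (NatTrans.IsMonoidal.map_eq_zero_of_isZero α hB _) _)

/-- Let `f, g : Spec S ⟶ X` be morphisms of schemes with `S` a local ring and `X`
quasi-separated, with pullback functors `F = f^*`, `G = g^*` (identified by being strong
monoidal and left adjoint to the direct images). If there exists a monoidal natural
transformation `α : f^* ⟶ g^*`, then the image `f(y)` of the closed point `y` of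
`Spec S` lies in the closure of `{g(y)}`. -/
theorem image_closedPoint_mem_closure_of_tensor_transformation
    (S : Type u) [CommRing S] [IsLocalRing S]
    {X : Scheme.{u}} [QuasiSeparatedSpace X]
    (f g : Spec (CommRingCat.of S) ⟶ X)
    (F G : SchemeModules X ⥤ SchemeModules (Spec (CommRingCat.of S)))
    [F.Monoidal] [G.Monoidal]
    (adjF : F ⊣ schemePushforward f) (adjG : G ⊣ schemePushforward g)
    (hα : ∃ α : F ⟶ G, NatTrans.IsMonoidal α) :
    f.base (IsLocalRing.closedPoint S) ∈
      closure {g.base (IsLocalRing.closedPoint S)} :=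
  image_closedPoint_mem_closure_of_tensor_transformation_general S f g F G adjF adjG hα
end

section
/- Let C be a cocomplete symmetric monoidal category with cocontinuous tensor product and unit 1. Then the algebraic monad END(1), with END(1)(n) = Hom(1, 1^{⊕n}), is commutative: for t ∈ END(1)(n) and t' ∈ END(1)(m), the two composites 1 → 1^{⊕n} → (1^{⊕m})^{⊕n} ≅ 1^{⊕(n×m)} (applying t then t'^{⊕n}) and 1 → 1^{⊕m} → (1^{⊕n})^{⊕m} ≅ 1^{⊕(n×m)} (applying t' then t^{⊕m}) agree under the canonical identifications. -/
/-!
Both composites equal `(λ_ 1).inv ≫ (t ⊗ t')`. For morphisms `g`, `f` out of the unit,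
`g ⊗ f` factors both as `g` followed by `f` on the second factor and as `f` followed by `g`
on the first factor, and by the universal property of the coproduct each side of the
theorem is one of these two factorizations.
-/

open CategoryTheory Limits MonoidalCategory

namespace CategoryTheory.MonoidalCategory

variable {C : Type*} [Category C] [MonoidalCategory C]

theorem leftUnitor_inv_unit_comp_tensorHom_eq_whiskerLeft {X Y : C}
    (g : 𝟙_ C ⟶ X) (f : 𝟙_ C ⟶ Y) :
    (λ_ (𝟙_ C)).inv ≫ (g ⊗ₘ f) = g ≫ (ρ_ X).inv ≫ X ◁ f := by
  rw [tensorHom_def, unitors_inv_equal, rightUnitor_inv_naturality_assoc]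

theorem leftUnitor_inv_unit_comp_tensorHom_eq_whiskerRight {X Y : C}
    (g : 𝟙_ C ⟶ X) (f : 𝟙_ C ⟶ Y) :
    (λ_ (𝟙_ C)).inv ≫ (g ⊗ₘ f) = f ≫ (λ_ Y).inv ≫ g ▷ Y := by
  rw [tensorHom_def', leftUnitor_inv_naturality_assoc]

end CategoryTheory.MonoidalCategory

namespace CategoryTheory.Limits.Sigma

variable {C : Type*} [Category C] [MonoidalCategory C]

theorem desc_ι_tensorHom_eq_whiskerLeft {ι : Type*} [HasCoproduct (fun _ : ι => 𝟙_ C)]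
    {Y : C} (f : 𝟙_ C ⟶ Y) :
    Sigma.desc (fun i => (λ_ (𝟙_ C)).inv ≫ (Sigma.ι (fun _ : ι => 𝟙_ C) i ⊗ₘ f)) =
      (ρ_ _).inv ≫ _ ◁ f := by
  ext i
  simp [leftUnitor_inv_unit_comp_tensorHom_eq_whiskerLeft]

theorem desc_tensorHom_ι_eq_whiskerRight {ι : Type*} [HasCoproduct (fun _ : ι => 𝟙_ C)]
    {X : C} (g : 𝟙_ C ⟶ X) :
    Sigma.desc (fun i => (λ_ (𝟙_ C)).inv ≫ (g ⊗ₘ Sigma.ι (fun _ : ι => 𝟙_ C) i)) =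
      (λ_ _).inv ≫ g ▷ _ := by
  ext i
  simp [leftUnitor_inv_unit_comp_tensorHom_eq_whiskerRight]

end CategoryTheory.Limits.Sigma

/-- In a cocomplete symmetric monoidal category with cocontinuous tensor product, the
algebraic monad `END(1)`, with `END(1)(n) = Hom(1, 1^{⊕n})`, is commutative: for
`t : 1 ⟶ 1^{⊕n}` and `t' : 1 ⟶ 1^{⊕m}`, applying `t` and then `t'` on each summand
agrees with applying `t'` and then `t` on each summand, under the canonical
identifications `(1^{⊕m})^{⊕n} ≅ 1^{⊕n} ⊗ 1^{⊕m} ≅ (1^{⊕n})^{⊕m}`. -/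
theorem END_unit_commutative
    {C : Type*} [Category C] [MonoidalCategory C] [SymmetricCategory C] [HasColimits C]
    [∀ X : C, PreservesColimits (tensorLeft X)]
    [∀ X : C, PreservesColimits (tensorRight X)]
    {n m : ℕ} (t : 𝟙_ C ⟶ ∐ (fun _ : Fin n => 𝟙_ C))
    (t' : 𝟙_ C ⟶ ∐ (fun _ : Fin m => 𝟙_ C)) :
    t ≫ Sigma.desc (fun i => (λ_ (𝟙_ C)).inv ≫
        (Sigma.ι (fun _ : Fin n => 𝟙_ C) i ⊗ₘ t')) =
      t' ≫ Sigma.desc (fun j => (λ_ (𝟙_ C)).inv ≫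
        (t ⊗ₘ Sigma.ι (fun _ : Fin m => 𝟙_ C) j)) := by
  rw [Sigma.desc_ι_tensorHom_eq_whiskerLeft, Sigma.desc_tensorHom_ι_eq_whiskerRight,
    ← leftUnitor_inv_unit_comp_tensorHom_eq_whiskerLeft,
    leftUnitor_inv_unit_comp_tensorHom_eq_whiskerRight]
end
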